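/- arXiv:1707.09652 — 8 statements merged into one kernel-verified Lean document; each statement's English description precedes it below -/
import Mathlib

section
/- Let f₁, f₂, …, f_s be integer polynomials, not all zero. Then there exist an integer polynomial f, a natural number r, rational numbers α, α₁, …, α_r, integers m₁, …, m_r with m_i > 1 for all i, and integers n₁, …, n_r with 0 < n_i < m_i for all i, such that for every integer x, gcd(f₁(x), f₂(x), …, f_s(x)) = (α + Σ_{i=1}^{r} α_i · gcd(x − n_i, m_i)) · |f(x)|. -/
/-!
Over `ℚ[X]` the `fᵢ` factor as `G * qᵢ` with `∑ uᵢ qᵢ = 1`; clearing denominators gives a positive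
integer `K` with `K fᵢ = F Qᵢ` and `∑ vᵢ Qᵢ = K` in `ℤ[X]`. Hence `K gcd fᵢ(x) = |F(x)| t(x)` with
`t(x) = gcd Qᵢ(x)`, and `t` is `K`-periodic because `t(x) ∣ K` and `Qᵢ(x + K) ≡ Qᵢ(x) mod K`.

Every periodic `g : ℤ → ℚ` is a rational combination of `1` and the functions `gcd(x - n, m)` with
`0 < n < m`. Indeed `g` is a combination of indicators of residue classes; Möbius inversion of
`gcd(y, M) = ∑_{d ∣ M, d ∣ y} φ(d)` writes the indicator of `M ∣ y` through the `gcd(y, d)`, `d ∣ M`;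
and `gcd(x, m) = c - ∑_{0 < j < m} gcd(x - j, m)`, the sum over a full residue system being constant.
-/

open Finset Function Submodule

def gcdSpan : Submodule ℚ (ℤ → ℚ) :=
  ℚ ∙ 1 ⊔ span ℚ {g | ∃ m n : ℤ, 1 < m ∧ 0 < n ∧ n < m ∧ g = fun x => (Int.gcd (x - n) m : ℚ)}

theorem exists_repr_of_mem_gcdSpan {g : ℤ → ℚ} (hg : g ∈ gcdSpan) :
    ∃ (r : ℕ) (α : ℚ) (a : Fin r → ℚ) (m : Fin r → ℤ) (n : Fin r → ℤ),
      (∀ i, 1 < m i) ∧ (∀ i, 0 < n i ∧ n i < m i) ∧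
      ∀ x, g x = α + ∑ i, a i * (Int.gcd (x - n i) (m i) : ℚ) := by
  obtain ⟨_, hc, _, hs, rfl⟩ := mem_sup.1 hg
  obtain ⟨α, rfl⟩ := mem_span_singleton.1 hc
  obtain ⟨r, a, h, rfl⟩ := mem_span_set'.1 hs
  choose m n hm hn hnm hh using fun i => (h i).2
  refine ⟨r, α, a, m, n, hm, fun i => ⟨hn i, hnm i⟩, fun x => ?_⟩
  simp [hh]

theorem sum_range_gcd_sub_eq (m : ℕ) (x : ℤ) :
    ∑ j ∈ range m, (Int.gcd (x - j) m : ℚ) = ∑ j ∈ range m, (Int.gcd j m : ℚ) := by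
  suffices Periodic (fun x : ℤ => ∑ j ∈ range m, (Int.gcd (x - j) m : ℚ)) 1 by
    simpa using this.int_mul_eq x
  intro x
  rcases m with _ | m
  · simp
  dsimp only
  rw [sum_range_succ', sum_range_succ]
  simp only [Nat.cast_add, Nat.cast_one, Nat.cast_zero, sub_zero, add_sub_add_right_eq_sub]
  rw [← Int.gcd_sub_self_left, add_sub_add_right_eq_sub]

theorem one_mem_gcdSpan : (1 : ℤ → ℚ) ∈ gcdSpan :=
  mem_sup_left (mem_span_singleton_self 1)

theorem gcd_sub_mem_gcdSpan_of_lt {m n : ℤ} (hn : 0 < n) (hnm : n < m) :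
    (fun x => (Int.gcd (x - n) m : ℚ)) ∈ gcdSpan :=
  mem_sup_right (subset_span ⟨m, n, by omega, hn, hnm, rfl⟩)

theorem gcd_mem_gcdSpan (m : ℕ) : (fun x => (Int.gcd x (m + 1) : ℚ)) ∈ gcdSpan := by
  have hsum : (fun x => (Int.gcd x (m + 1) : ℚ)) =
      (∑ j ∈ range (m + 1), (Int.gcd j (m + 1) : ℚ)) • 1 -
        ∑ j ∈ range m, fun x => (Int.gcd (x - (j + 1 : ℕ)) (m + 1) : ℚ) := by
    ext x
    have := sum_range_gcd_sub_eq (m + 1) x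
    rw [sum_range_succ'] at this
    push_cast at this ⊢
    simp only [Pi.sub_apply, Pi.smul_apply, Finset.sum_apply, Pi.one_apply, smul_eq_mul,
      mul_one, sub_zero] at this ⊢
    linarith
  rw [hsum]
  refine sub_mem (smul_mem _ _ one_mem_gcdSpan) (sum_mem fun j hj => ?_)
  exact gcd_sub_mem_gcdSpan_of_lt (by positivity) (by simpa using mem_range.1 hj)

theorem gcd_sub_mem_gcdSpan (m : ℕ) (hm : 0 < m) (n : ℤ) :
    (fun x => (Int.gcd (x - n) m : ℚ)) ∈ gcdSpan := by
  have hred : (fun x => (Int.gcd (x - n) m : ℚ)) = fun x => (Int.gcd (x - n % m) m : ℚ) := by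
    ext x
    rw [Int.emod_def, show x - (n - m * (n / m)) = x - n + n / m * m by ring,
      Int.gcd_add_mul_right_left]
  obtain ⟨m, rfl⟩ := Nat.exists_eq_add_one_of_ne_zero hm.ne'
  rw [hred]
  rcases (Int.emod_nonneg n (by positivity : ((m + 1 : ℕ) : ℤ) ≠ 0)).eq_or_lt with h | h
  · rw [← h]
    simpa using gcd_mem_gcdSpan m
  · exact gcd_sub_mem_gcdSpan_of_lt h (Int.emod_lt_of_pos _ (by positivity))

theorem sum_totient_divisors_dvd_eq_gcd (y : ℤ) {m : ℕ} (hm : 0 < m) :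
    ∑ d ∈ m.divisors, (if (d : ℤ) ∣ y then (d.totient : ℚ) else 0) = Int.gcd y m := by
  have hgcd : Int.gcd y m = Nat.gcd y.natAbs m := by rw [Int.gcd, Int.natAbs_natCast]
  have hfilter : m.divisors.filter (fun d : ℕ => (d : ℤ) ∣ y) = (Int.gcd y m).divisors := by
    rw [hgcd, ← Nat.divisors_filter_dvd_of_dvd hm.ne' (Nat.gcd_dvd_right ..)]
    refine filter_congr fun d hd => ?_
    rw [Int.natCast_dvd, Nat.dvd_gcd_iff]
    exact (and_iff_left (Nat.dvd_of_mem_divisors hd)).symm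
  rw [← sum_filter, hfilter]
  exact_mod_cast Nat.sum_totient _

theorem indicator_dvd_sub_mem_gcdSpan {M : ℕ} (hM : 0 < M) (n : ℤ) :
    (fun x => if (M : ℤ) ∣ x - n then (1 : ℚ) else 0) ∈ gcdSpan := by
  have hinv (y : ℤ) := (ArithmeticFunction.sum_eq_iff_sum_mul_moebius_eq
    (f := fun d => if (d : ℤ) ∣ y then (d.totient : ℚ) else 0)
    (g := fun d => (Int.gcd y d : ℚ))).1 (fun m hm => sum_totient_divisors_dvd_eq_gcd y hm) M hM
  have hφ : (M.totient : ℚ) ≠ 0 := by exact_mod_cast (Nat.totient_pos.2 hM).ne'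
  have hsum : (fun x => if (M : ℤ) ∣ x - n then (1 : ℚ) else 0) = (M.totient : ℚ)⁻¹ •
      ∑ p ∈ M.divisorsAntidiagonal, (ArithmeticFunction.moebius p.1 : ℚ) •
        fun x => (Int.gcd (x - n) p.2 : ℚ) := by
    ext x
    have := hinv (x - n)
    simp only [Pi.smul_apply, Finset.sum_apply, smul_eq_mul] at this ⊢
    rw [this]
    split_ifs <;> simp [hφ]
  rw [hsum]
  refine smul_mem _ _ (sum_mem fun p hp => smul_mem _ _ (gcd_sub_mem_gcdSpan p.2 ?_ n))
  exact Nat.pos_of_mem_divisors (Nat.snd_mem_divisors_of_mem_antidiagonal hp)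

theorem mem_gcdSpan_of_periodic {g : ℤ → ℚ} {M : ℕ} (hM : 0 < M) (hg : Periodic g M) :
    g ∈ gcdSpan := by
  have hM' : (0 : ℤ) < M := by exact_mod_cast hM
  have hsum : g = ∑ k ∈ Ico 0 (M : ℤ), g k • fun x => if (M : ℤ) ∣ x - k then (1 : ℚ) else 0 := by
    ext x
    have hdvd : ∀ k ∈ Ico 0 (M : ℤ), ((M : ℤ) ∣ x - k ↔ x % M = k) := fun k hk => by
      rw [mem_Ico] at hk
      rw [← Int.modEq_iff_dvd, Int.ModEq, Int.emod_eq_of_lt hk.1 hk.2, eq_comm]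
    simp only [Finset.sum_apply, Pi.smul_apply, smul_eq_mul, mul_ite, mul_one, mul_zero]
    rw [sum_congr rfl fun k hk => if_congr (hdvd k hk) rfl rfl, sum_ite_eq, if_pos]
    · rw [Int.emod_def, mul_comm, ← smul_eq_mul, hg.sub_zsmul_eq]
    · exact mem_Ico.2 ⟨Int.emod_nonneg _ hM'.ne', Int.emod_lt_of_pos _ hM'⟩
  rw [hsum]
  exact sum_mem fun k _ => smul_mem _ _ (indicator_dvd_sub_mem_gcdSpan hM k)

open Polynomial

attribute [local instance] Polynomial.algebra in
theorem exists_int_mul_eq_map (s : Finset ℚ[X]) :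
    ∃ b : ℤ, b ≠ 0 ∧ ∀ p ∈ s, ∃ P : ℤ[X], P.map (Int.castRingHom ℚ) = C (b : ℚ) * p := by
  have := Polynomial.isLocalization (nonZeroDivisors ℤ) ℚ
  obtain ⟨⟨_, b, hb, rfl⟩, h⟩ := IsLocalization.exist_integer_multiples_of_finset
    ((nonZeroDivisors ℤ).map (C : ℤ →+* ℤ[X])) s
  refine ⟨b, nonZeroDivisors.ne_zero hb, fun p hp => ?_⟩
  obtain ⟨P, hP⟩ := h p hp
  exact ⟨P, by simpa [Algebra.smul_def] using hP⟩

theorem exists_eq_mul_and_sum_mul_eq_one {R ι : Type*} [CommRing R] [IsDomain R] [IsBezout R]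
    [NormalizedGCDMonoid R] [Fintype ι] {f : ι → R} (hf : ∃ i, f i ≠ 0) :
    ∃ (G : R) (q u : ι → R), (∀ i, f i = G * q i) ∧ ∑ i, u i * q i = 1 := by
  have hG : univ.gcd f ≠ 0 := fun h => by
    obtain ⟨i, hi⟩ := hf
    exact hi (gcd_eq_zero_iff.1 h i (mem_univ i))
  choose q hq using fun i => gcd_dvd (mem_univ i) (f := f)
  obtain ⟨u, hu⟩ := univ.gcd_eq_sum_mul f
  refine ⟨univ.gcd f, q, u, hq, mul_left_cancel₀ hG ?_⟩
  conv_rhs => rw [mul_one, hu]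
  simp_rw [mul_sum, hq]
  exact sum_congr rfl fun i _ => by ring

theorem exists_int_factor_bezout {ι : Type*} [Fintype ι] {f : ι → ℤ[X]} (hf : ∃ i, f i ≠ 0) :
    ∃ (F : ℤ[X]) (Q v : ι → ℤ[X]) (K : ℕ), 0 < K ∧ (∀ i, C (K : ℤ) * f i = F * Q i) ∧
      ∑ i, v i * Q i = C (K : ℤ) := by
  classical
  have hinj' : Injective (Int.castRingHom ℚ) := RingHom.injective_int _
  have hinj : Injective (map (Int.castRingHom ℚ)) := map_injective _ hinj'
  obtain ⟨G, q, u, hq, hu⟩ :=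
    exists_eq_mul_and_sum_mul_eq_one (f := fun i => (f i).map (Int.castRingHom ℚ))
      (by obtain ⟨i, hi⟩ := hf; exact ⟨i, (Polynomial.map_ne_zero_iff hinj').2 hi⟩)
  obtain ⟨b, hb, hint⟩ := exists_int_mul_eq_map ({G} ∪ univ.image q ∪ univ.image u)
  obtain ⟨F, hF⟩ := hint G (by simp)
  choose Q hQ using fun i => hint (q i) (by simp)
  choose v hv using fun i => hint (u i) (by simp)
  have hK : ((b.natAbs ^ 2 : ℕ) : ℤ) = b ^ 2 := by rw [Nat.cast_pow, Int.natAbs_sq]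
  refine ⟨F, Q, v, b.natAbs ^ 2, by positivity, fun i => hinj ?_, hinj ?_⟩
  · rw [Polynomial.map_mul, Polynomial.map_mul, map_C, hF, hQ, hq, hK, map_pow, eq_intCast,
      C_pow]
    ring
  · rw [Polynomial.map_sum, map_C, hK, map_pow, eq_intCast, C_pow,
      ← mul_one (C (b : ℚ) ^ 2), ← hu, mul_sum]
    simp only [Polynomial.map_mul, hv, hQ]
    exact sum_congr rfl fun i _ => by ring

theorem periodic_gcd_eval {ι : Type*} (s : Finset ι) {Q v : ι → ℤ[X]} {N : ℤ}
    (h : ∑ i ∈ s, v i * Q i = C N) : Periodic (fun x => s.gcd fun i => (Q i).eval x) N := by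
  have hdvd : ∀ x y, N ∣ x - y →
      (s.gcd fun i => (Q i).eval x) ∣ s.gcd fun i => (Q i).eval y := by
    intro x y hxy
    have hN : (s.gcd fun i => (Q i).eval x) ∣ N := by
      rw [← eval_C (a := N) (x := x), ← h, eval_finsetSum]
      exact dvd_sum fun i hi => (gcd_dvd hi).mul_left _ |>.trans (by rw [eval_mul])
    refine Finset.dvd_gcd fun i hi => ?_
    simpa using dvd_sub (gcd_dvd hi) ((hN.trans hxy).trans (sub_dvd_eval_sub x y (Q i)))
  intro x
  exact dvd_antisymm_of_normalize_eq normalize_gcd normalize_gcd (hdvd _ _ (by simp))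
    (hdvd _ _ (by simp))

theorem natCast_mul_gcd_eval_eq {ι : Type*} (s : Finset ι) {f Q : ι → ℤ[X]} {F : ℤ[X]} {K : ℕ}
    (h : ∀ i, C (K : ℤ) * f i = F * Q i) (x : ℤ) :
    K * s.gcd (fun i => (f i).eval x) = |F.eval x| * s.gcd fun i => (Q i).eval x := by
  have := congrArg s.gcd (funext fun i => congrArg (Polynomial.eval x) (h i))
  simpa only [eval_mul, eval_C, Finset.gcd_mul_left, ← Int.abs_eq_normalize, Nat.abs_cast]
    using this

/-- **Theorem 2.** The greatest common divisor of a set of integer polynomials in `q`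
(not all zero) can be expressed in the form `d·f` where `f` is an integer polynomial
and `d = α + ∑ αᵢ gcd(x - nᵢ, mᵢ)`. -/
theorem gcd_of_poly_values_is_PORC (s : ℕ) (f : Fin s → Polynomial ℤ)
    (hne : ∃ i, f i ≠ 0) :
    ∃ (F : Polynomial ℤ) (r : ℕ) (α : ℚ) (a : Fin r → ℚ) (m : Fin r → ℤ) (n : Fin r → ℤ),
      (∀ i, 1 < m i) ∧ (∀ i, 0 < n i ∧ n i < m i) ∧
      ∀ x : ℤ,
        ((Finset.univ.gcd fun i => (f i).eval x : ℤ) : ℚ) =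
          (α + ∑ i, a i * (Int.gcd (x - n i) (m i) : ℚ)) * ((|F.eval x| : ℤ) : ℚ) := by
  obtain ⟨F, Q, v, K, hK, hfac, hbez⟩ := exists_int_factor_bezout hne
  have hper : Periodic (fun x => ((univ.gcd fun i => (Q i).eval x : ℤ) : ℚ) / K) K :=
    (periodic_gcd_eval univ hbez).comp fun t : ℤ => (t : ℚ) / K
  obtain ⟨r, α, a, m, n, hm, hn, ht⟩ :=
    exists_repr_of_mem_gcdSpan (mem_gcdSpan_of_periodic hK hper)
  refine ⟨F, r, α, a, m, n, hm, hn, fun x => ?_⟩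
  have hx := natCast_mul_gcd_eval_eq univ hfac x
  qify at hx
  rw [← ht x]
  push_cast
  field_simp
  linear_combination hx
end

section
/- Let g₁, g₂, …, g_s be integer polynomials whose greatest common divisor in ℚ[X] is 1 (i.e., they generate the unit ideal of ℚ[X]). Then there exists a positive integer m such that for every integer x, gcd(g₁(x), g₂(x), …, g_s(x)) divides m. -/
/-- Any rational polynomial has a positive integer multiple with integer
coefficients. -/
lemma exists_pos_int_smul_map (p : Polynomial ℚ) :
    ∃ n : ℤ, 0 < n ∧ ∃ P : Polynomial ℤ,
      P.map (Int.castRingHom ℚ) = n • p := by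
  obtain ⟨b, hb⟩ := IsLocalization.integerNormalization_map_to_map
    (nonZeroDivisors ℤ) p
  have hbne : (b : ℤ) ≠ 0 := nonZeroDivisors.coe_ne_zero b
  have halg : (algebraMap ℤ ℚ) = Int.castRingHom ℚ := rfl
  rcases lt_or_gt_of_ne hbne with hlt | hgt
  · refine ⟨-(b : ℤ), by omega, -(IsLocalization.integerNormalization
      (nonZeroDivisors ℤ) p), ?_⟩
    rw [Polynomial.map_neg, ← halg, hb, neg_smul]
  · exact ⟨(b : ℤ), hgt, _, halg ▸ hb⟩

/-- If integer polynomials `g₁, …, g_s` generate the unit ideal of `ℚ[X]`,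
then there is a positive integer `m` such that `gcd(g₁(x), …, g_s(x)) ∣ m`
for every integer `x`. -/
theorem gcd_values_dvd_of_unit_ideal (s : ℕ) (g : Fin s → Polynomial ℤ)
    (hunit : Ideal.span (Set.range fun i => (g i).map (Int.castRingHom ℚ)) = ⊤) :
    ∃ m : ℤ, 0 < m ∧ ∀ x : ℤ, (Finset.univ.gcd fun i => (g i).eval x) ∣ m := by
  have h1 : (1 : Polynomial ℚ) ∈ Ideal.span
      (Set.range fun i => (g i).map (Int.castRingHom ℚ)) := by
    rw [hunit]; trivial
  rw [Ideal.mem_span_range_iff_exists_fun] at h1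
  obtain ⟨c, hc⟩ := h1
  choose n hn P hP using fun i => exists_pos_int_smul_map (c i)
  set d : ℤ := ∏ i, n i with hd
  have hdpos : 0 < d := Finset.prod_pos fun i _ => hn i
  set H : Fin s → Polynomial ℤ :=
    fun i => (∏ j ∈ Finset.univ.erase i, n j) • P i with hH
  have key : (∑ i, H i * g i) = Polynomial.C d := by
    apply Polynomial.map_injective (Int.castRingHom ℚ) Int.cast_injective
    rw [Polynomial.map_sum, Polynomial.map_C]
    have key2 : ∀ i : Fin s, (H i * g i).map (Int.castRingHom ℚ)
        = Polynomial.C (d : ℚ) * (c i * (g i).map (Int.castRingHom ℚ)) := by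
      intro i
      have hki : (n i) * (∏ j ∈ Finset.univ.erase i, n j) = d :=
        Finset.mul_prod_erase _ _ (Finset.mem_univ i)
      simp only [hH, zsmul_eq_mul, Polynomial.map_mul, Polynomial.map_intCast,
        hP i, ← hki, Polynomial.C_eq_intCast]
      push_cast
      ring
    simp only [key2]
    rw [← Finset.mul_sum, hc, mul_one]
    simp [Polynomial.C_eq_intCast]
  refine ⟨d, hdpos, fun x => ?_⟩
  have := congrArg (Polynomial.eval x) key
  rw [Polynomial.eval_finset_sum, Polynomial.eval_C] at this
  rw [← this]
  refine Finset.dvd_sum fun i _ => ?_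
  rw [Polynomial.eval_mul]
  exact Dvd.dvd.mul_left
    (Finset.gcd_dvd (Finset.mem_univ i)) _
end

section
/- Let f₁, f₂, …, f_s be integer polynomials, not all zero, and let f be a primitive integer polynomial that is a greatest common divisor of f₁, …, f_s in ℚ[X]. Then there exists a positive integer m such that for every integer x there is a positive divisor d of m with gcd(f₁(x), f₂(x), …, f_s(x)) = d · |f(x)|, except that when f(x) = 0 the gcd is 0. -/
/-!
Over `ℚ[X]` the cofactors `gᵢ = fᵢ / f` have no common divisor, so `1 = Σ cᵢ gᵢ` with `cᵢ ∈ ℚ[X]`;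
clearing denominators gives `n = Σ eᵢ gᵢ` with `0 ≠ n ∈ ℤ` and `eᵢ ∈ ℤ[X]`. By Gauss's lemma
`fᵢ = f gᵢ` in `ℤ[X]`, so `gcd_i fᵢ(x) = |f(x)| · gcd_i gᵢ(x)`, and evaluating the identity at `x`
shows that `gcd_i gᵢ(x)` divides `n`; take `m = |n|`.
-/

open Polynomial

theorem Ideal.span_range_eq_top_of_forall_dvd_isUnit {R ι : Type*} [CommRing R]
    [IsPrincipalIdealRing R] (g : ι → R) (h : ∀ D, (∀ i, D ∣ g i) → IsUnit D) :
    Ideal.span (Set.range g) = ⊤ := by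
  set I := Ideal.span (Set.range g)
  have hdvd : ∀ i, Submodule.IsPrincipal.generator I ∣ g i := fun i =>
    (Submodule.IsPrincipal.mem_iff_generator_dvd I).1 (Ideal.subset_span ⟨i, rfl⟩)
  exact Ideal.eq_top_of_isUnit_mem I (Submodule.IsPrincipal.generator_mem I) (h _ hdvd)

theorem Polynomial.exists_C_mem_span_of_span_map_eq_top {R A ι : Type*} [CommRing R] [CommRing A]
    [Algebra R A] (S : Submonoid R) [IsLocalization S A] (g : ι → R[X])
    (h : Ideal.span (Set.range fun i => (g i).map (algebraMap R A)) = ⊤) :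
    ∃ b ∈ S, C b ∈ Ideal.span (Set.range g) := by
  let := Polynomial.algebra R A
  have := Polynomial.isLocalization S A
  have hone : algebraMap R[X] A[X] 1 ∈ (Ideal.span (Set.range g)).map (algebraMap R[X] A[X]) := by
    rw [Ideal.map_span, ← Set.range_comp, map_one]
    exact h ▸ Submodule.mem_top
  obtain ⟨_, ⟨b, hb, rfl⟩, hmem⟩ :=
    (IsLocalization.algebraMap_mem_map_algebraMap_iff (S.map C) A[X] _ 1).1 hone
  exact ⟨b, hb, by simpa using hmem⟩

theorem Polynomial.gcd_eval_dvd_of_C_mem_span {R ι : Type*} [CommRing R] [NormalizedGCDMonoid R]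
    [Fintype ι] (g : ι → R[X]) {n : R} (hn : C n ∈ Ideal.span (Set.range g)) (x : R) :
    (Finset.univ.gcd fun i => (g i).eval x) ∣ n := by
  have hmem := Ideal.mem_map_of_mem (evalRingHom x) hn
  rw [Ideal.map_span, ← Set.range_comp, coe_evalRingHom, eval_C] at hmem
  refine Ideal.mem_span_singleton.1 (Ideal.span_le.2 ?_ hmem)
  rintro _ ⟨i, rfl⟩
  exact Ideal.mem_span_singleton.2 (Finset.gcd_dvd (Finset.mem_univ i))

theorem gcd_values_eq_divisor_mul_abs_general (s : ℕ) (f : Fin s → Polynomial ℤ)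
    (F : Polynomial ℤ) (hprim : F.IsPrimitive)
    (hdvd : ∀ i, F.map (Int.castRingHom ℚ) ∣ (f i).map (Int.castRingHom ℚ))
    (hgcd : ∀ D : Polynomial ℚ, (∀ i, D ∣ (f i).map (Int.castRingHom ℚ)) →
      D ∣ F.map (Int.castRingHom ℚ)) :
    ∃ m : ℤ, 0 < m ∧ ∀ x : ℤ,
      (F.eval x = 0 → (Finset.univ.gcd fun i => (f i).eval x) = 0) ∧
      ∃ d : ℤ, 0 < d ∧ d ∣ m ∧
        (Finset.univ.gcd fun i => (f i).eval x) = d * |F.eval x| := by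
  choose g hg using fun i => hprim.dvd_of_fraction_map_dvd_fraction_map (hdvd i)
  have hFmap : F.map (Int.castRingHom ℚ) ≠ 0 :=
    (Polynomial.map_ne_zero_iff (Int.castRingHom ℚ).injective_int).2 hprim.ne_zero
  have hcoprime : Ideal.span (Set.range fun i => (g i).map (algebraMap ℤ ℚ)) = ⊤ := by
    refine Ideal.span_range_eq_top_of_forall_dvd_isUnit _ fun D hD => isUnit_of_dvd_one ?_
    have hDF : D * F.map _ ∣ F.map _ := hgcd _ fun i => by
      rw [hg i, Polynomial.map_mul, mul_comm D]
      exact mul_dvd_mul_left _ (hD i)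
    exact (mul_dvd_mul_iff_right hFmap).1 (by rwa [one_mul])
  obtain ⟨n, hn, hspan⟩ := exists_C_mem_span_of_span_map_eq_top (nonZeroDivisors ℤ) g hcoprime
  refine ⟨|n|, abs_pos.2 (nonZeroDivisors.ne_zero hn), fun x => ?_⟩
  set d := Finset.univ.gcd fun i => (g i).eval x
  have hgcd_eq : (Finset.univ.gcd fun i => (f i).eval x) = d * |F.eval x| := by
    simp only [hg, eval_mul, Finset.gcd_mul_left, ← Int.abs_eq_normalize, d, mul_comm]
  have hd_dvd : d ∣ n := gcd_eval_dvd_of_C_mem_span g hspan x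
  have hd_pos : 0 < d := lt_of_le_of_ne (Int.nonneg_of_normalize_eq_self Finset.normalize_gcd)
    (ne_zero_of_dvd_ne_zero (nonZeroDivisors.ne_zero hn) hd_dvd).symm
  exact ⟨fun h0 => by rw [hgcd_eq, h0, abs_zero, mul_zero], d, hd_pos,
    hd_dvd.trans (self_dvd_abs n), hgcd_eq⟩

/-- If `f` is a primitive integer polynomial which is a greatest common divisor in
`ℚ[X]` of the integer polynomials `f₁, …, f_s` (not all zero), then there is a
positive integer `m` such that for every integer `x` there is a positive divisor
`d` of `m` with `gcd(f₁(x), …, f_s(x)) = d·|f(x)|` (when `f(x) = 0` the gcd is `0`). -/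
theorem gcd_values_eq_divisor_mul_abs (s : ℕ) (f : Fin s → Polynomial ℤ)
    (hne : ∃ i, f i ≠ 0) (F : Polynomial ℤ) (hprim : F.IsPrimitive)
    (hdvd : ∀ i, F.map (Int.castRingHom ℚ) ∣ (f i).map (Int.castRingHom ℚ))
    (hgcd : ∀ D : Polynomial ℚ, (∀ i, D ∣ (f i).map (Int.castRingHom ℚ)) →
      D ∣ F.map (Int.castRingHom ℚ)) :
    ∃ m : ℤ, 0 < m ∧ ∀ x : ℤ,
      (F.eval x = 0 → (Finset.univ.gcd fun i => (f i).eval x) = 0) ∧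
      ∃ d : ℤ, 0 < d ∧ d ∣ m ∧
        (Finset.univ.gcd fun i => (f i).eval x) = d * |F.eval x| :=
  gcd_values_eq_divisor_mul_abs_general s f F hprim hdvd hgcd
end

section
/- Let m be an integer with m > 1 and let S be the set of prime divisors of m. For a subset T of S write d_T = ∏_{p ∈ T} p. Then for every integer x that is not divisible by m, Σ_{T ⊆ S} (−1)^{|T|} · gcd(x, m / d_T) = 0. -/
open Finset

private lemma fac_prod_primes {T : Finset ℕ} (hT : ∀ p ∈ T, p.Prime) (q : ℕ) :
    (∏ p ∈ T, p).factorization q = if q ∈ T then 1 else 0 := by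
  rw [Nat.factorization_prod (fun p hp => (hT p hp).ne_zero)]
  rw [Finset.sum_apply']
  rw [Finset.sum_congr rfl (fun p hp => by
    rw [(hT p hp).factorization, Finsupp.single_apply])]
  simp

private lemma mul_prod_dvd_iff {m d : ℕ} (hm : m ≠ 0) (hd : d ∣ m) {T : Finset ℕ}
    (hT : ∀ p ∈ T, p.Prime) :
    d * (∏ p ∈ T, p) ∣ m ↔ ∀ p ∈ T, p * d ∣ m := by
  have hd0 : d ≠ 0 := fun h => hm (by simpa [h] using hd)
  have hP0 : (∏ p ∈ T, p) ≠ 0 := Finset.prod_ne_zero_iff.mpr fun p hp => (hT p hp).ne_zero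
  constructor
  · intro h p hp
    have h1 : p * d ∣ (∏ p ∈ T, p) * d :=
      mul_dvd_mul (Finset.dvd_prod_of_mem _ hp) dvd_rfl
    exact h1.trans (by rwa [mul_comm])
  · intro h
    rw [← Nat.factorization_le_iff_dvd (mul_ne_zero hd0 hP0) hm, Finsupp.le_def]
    intro q
    rw [Nat.factorization_mul hd0 hP0, Finsupp.add_apply, fac_prod_primes hT]
    by_cases hq : q ∈ T
    · have h2 := Finsupp.le_def.mp
        ((Nat.factorization_le_iff_dvd (mul_ne_zero (hT q hq).ne_zero hd0) hm).mpr (h q hq)) q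
      rw [Nat.factorization_mul (hT q hq).ne_zero hd0, Finsupp.add_apply,
        (hT q hq).factorization, Finsupp.single_apply] at h2
      simp only [hq, if_true, if_pos rfl] at h2 ⊢
      omega
    · simpa [hq] using Finsupp.le_def.mp ((Nat.factorization_le_iff_dvd hd0 hm).mpr hd) q

/-- For `m > 1` with prime divisor set `S`, and any integer `x` not divisible by `m`,
`∑_{T ⊆ S} (-1)^{|T|} gcd(x, m / d_T) = 0`, where `d_T = ∏_{p ∈ T} p`. -/
theorem alternating_sum_gcd_eq_zero (m : ℕ) (hm : 1 < m) (x : ℤ) (hx : ¬ (m : ℤ) ∣ x) :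
    (∑ T ∈ m.primeFactors.powerset,
        (-1 : ℤ) ^ T.card * (Int.gcd x ((m / ∏ p ∈ T, p : ℕ) : ℤ) : ℤ)) = 0 := by
  classical
  have hm0 : m ≠ 0 := by omega
  have hprime : ∀ p ∈ m.primeFactors, p.Prime := fun p hp => Nat.prime_of_mem_primeFactors hp
  -- step 1: rewrite each gcd as a sum over divisors of m
  have key : ∀ T ∈ m.primeFactors.powerset,
      ((Int.gcd x ((m / ∏ p ∈ T, p : ℕ) : ℤ)) : ℤ)
        = ∑ d ∈ m.divisors,
            if d ∣ x.natAbs ∧ d * (∏ p ∈ T, p) ∣ m then (d.totient : ℤ) else 0 := by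
    intro T hT
    rw [Finset.mem_powerset] at hT
    have hTp : ∀ p ∈ T, p.Prime := fun p hp => hprime p (hT hp)
    have hdT : (∏ p ∈ T, p) ∣ m :=
      (Finset.prod_dvd_prod_of_subset _ _ _ hT).trans (Nat.prod_primeFactors_dvd m)
    have hP0 : (∏ p ∈ T, p) ≠ 0 := Finset.prod_ne_zero_iff.mpr fun p hp => (hTp p hp).ne_zero
    have hn0 : m / ∏ p ∈ T, p ≠ 0 := by
      have := Nat.div_pos (Nat.le_of_dvd (Nat.pos_of_ne_zero hm0) hdT) (Nat.pos_of_ne_zero hP0)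
      omega
    have hgcd : Int.gcd x ((m / ∏ p ∈ T, p : ℕ) : ℤ) = Nat.gcd x.natAbs (m / ∏ p ∈ T, p) := by
      rw [Int.gcd, Int.natAbs_natCast]
    have hnat : Nat.gcd x.natAbs (m / ∏ p ∈ T, p)
        = ∑ d ∈ m.divisors,
            if d ∣ x.natAbs ∧ d * (∏ p ∈ T, p) ∣ m then d.totient else 0 := by
      conv_lhs => rw [← Nat.sum_totient (Nat.gcd x.natAbs (m / ∏ p ∈ T, p))]
      rw [← Finset.sum_filter]
      apply Finset.sum_congr _ (fun _ _ => rfl)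
      ext d
      have hg0 : Nat.gcd x.natAbs (m / ∏ p ∈ T, p) ≠ 0 := fun h => hn0 (Nat.eq_zero_of_gcd_eq_zero_right h)
      simp only [Nat.mem_divisors, Finset.mem_filter, Nat.dvd_gcd_iff]
      constructor
      · rintro ⟨⟨h1, h2⟩, -⟩
        refine ⟨⟨h2.trans (Nat.div_dvd_of_dvd hdT), hm0⟩, h1, ?_⟩
        rwa [mul_comm, ← Nat.dvd_div_iff_mul_dvd hdT]
      · rintro ⟨⟨-, -⟩, h1, h2⟩
        refine ⟨⟨h1, ?_⟩, hg0⟩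
        rw [Nat.dvd_div_iff_mul_dvd hdT, mul_comm]
        exact h2
    rw [hgcd, hnat]
    push_cast [Finset.sum_ite]
    simp
  rw [Finset.sum_congr rfl (fun T hT => by rw [key T hT] :
    ∀ T ∈ m.primeFactors.powerset, (-1 : ℤ) ^ T.card * ((Int.gcd x ((m / ∏ p ∈ T, p : ℕ) : ℤ)) : ℤ)
      = (-1 : ℤ) ^ T.card * ∑ d ∈ m.divisors,
          if d ∣ x.natAbs ∧ d * (∏ p ∈ T, p) ∣ m then (d.totient : ℤ) else 0)]
  simp_rw [Finset.mul_sum]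
  rw [Finset.sum_comm]
  apply Finset.sum_eq_zero
  intro d hd
  rw [Nat.mem_divisors] at hd
  have hdvd := hd.1
  by_cases hda : d ∣ x.natAbs
  · -- condition on T becomes T ⊆ S'
    have hdm : d ≠ m := by
      rintro rfl
      exact hx ((Int.natCast_dvd_natCast.mpr hda).trans (Int.natAbs_dvd.mpr dvd_rfl))
    set S' := m.primeFactors.filter (fun p => p * d ∣ m) with hS'
    have hsub : S' ⊆ m.primeFactors := Finset.filter_subset _ _
    have step : ∀ T ∈ m.primeFactors.powerset,
        (-1 : ℤ) ^ T.card * (if d ∣ x.natAbs ∧ d * (∏ p ∈ T, p) ∣ m then (d.totient : ℤ) else 0)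
          = if T ∈ S'.powerset then (-1 : ℤ) ^ T.card * d.totient else 0 := by
      intro T hT
      rw [Finset.mem_powerset] at hT
      have hTp : ∀ p ∈ T, p.Prime := fun p hp => hprime p (hT hp)
      have : (d ∣ x.natAbs ∧ d * (∏ p ∈ T, p) ∣ m) ↔ T ∈ S'.powerset := by
        rw [Finset.mem_powerset]
        constructor
        · rintro ⟨-, h⟩ p hp
          rw [hS', Finset.mem_filter]
          exact ⟨hT hp, (mul_prod_dvd_iff hm0 hdvd hTp).mp h p hp⟩
        · intro h
          refine ⟨hda, (mul_prod_dvd_iff hm0 hdvd hTp).mpr fun p hp => ?_⟩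
          exact (Finset.mem_filter.mp (h hp)).2
      simp only [this]
      split <;> simp
    rw [Finset.sum_congr rfl step, Finset.sum_ite_mem,
      Finset.inter_eq_right.mpr (Finset.powerset_mono.mpr hsub), ← Finset.sum_mul,
      Finset.sum_powerset_neg_one_pow_card]
    have hS'ne : S' ≠ ∅ := by
      intro hE
      -- then d = m, contradiction
      apply hdm
      by_contra hne
      have hlt : d < m := lt_of_le_of_ne (Nat.le_of_dvd (Nat.pos_of_ne_zero hm0) hdvd) hne
      have hd0 : d ≠ 0 := fun h => hm0 (by simpa [h] using hdvd)
      have h1 : m / d ≠ 1 := by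
        intro h
        have := Nat.div_mul_cancel hdvd
        rw [h, one_mul] at this
        omega
      obtain ⟨p, hp, hpd⟩ := Nat.exists_prime_and_dvd h1
      have hpm : p * d ∣ m := by
        rw [mul_comm, ← Nat.dvd_div_iff_mul_dvd hdvd]
        exact hpd
      have hpS : p ∈ m.primeFactors :=
        Nat.mem_primeFactors.mpr ⟨hp, hpd.trans (Nat.div_dvd_of_dvd hdvd), hm0⟩
      have : p ∈ S' := Finset.mem_filter.mpr ⟨hpS, hpm⟩
      simp [hE] at this
    simp [hS'ne]
  · apply Finset.sum_eq_zero
    intro T hT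
    simp [hda]
end

section
/- Let m be an integer with m > 1 and let S be the set of prime divisors of m. For a subset T of S write d_T = ∏_{p ∈ T} p. Then for every integer x, Σ_{T ⊆ S} (−1)^{|T|} · gcd(x, m / d_T) equals φ(m) if m divides x, and equals 0 otherwise. -/
open Finset ArithmeticFunction
open scoped ArithmeticFunction.Moebius Nat

/-!
Since `gcd(a, k) = ∑_{d ∣ k, d ∣ a} φ(d)`, Möbius inversion of `k ↦ gcd(a, k)` recovers the
indicator `d ↦ [d ∣ a] φ(d)`: `∑_{d ∣ m} μ(d) gcd(a, m/d) = [m ∣ a] φ(m)`. Only squarefree `d`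
contribute, and these are exactly the products `d_T` of subsets `T` of the prime divisors of `m`,
with `μ(d_T) = (-1)^|T|`.
-/

theorem Nat.divisors_gcd {a n : ℕ} (hn : n ≠ 0) :
    (a.gcd n).divisors = {d ∈ n.divisors | d ∣ a} := by
  ext d
  simp only [mem_divisors, mem_filter, Nat.dvd_gcd_iff, ne_eq, Nat.gcd_eq_zero_iff, hn, and_false,
    not_false_eq_true]
  tauto

theorem Nat.sum_totient_filter_dvd {a n : ℕ} (hn : n ≠ 0) :
    ∑ d ∈ n.divisors with d ∣ a, φ d = a.gcd n := by
  rw [← Nat.divisors_gcd hn, Nat.sum_totient]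

theorem ArithmeticFunction.moebius_prod_primes {T : Finset ℕ} (hT : ∀ p ∈ T, p.Prime) :
    μ (∏ p ∈ T, p) = (-1) ^ T.card := by
  rw [isMultiplicative_moebius.map_prod_of_prime T hT,
    prod_congr rfl fun p hp => moebius_apply_prime (hT p hp), prod_const]

theorem ArithmeticFunction.sum_divisors_moebius_mul_eq_sum_powerset {R : Type*} [CommRing R]
    {n : ℕ} (hn : n ≠ 0) (f : ℕ → R) :
    ∑ d ∈ n.divisors, (μ d : R) * f d =
      ∑ T ∈ n.primeFactors.powerset, (-1 : R) ^ T.card * f (∏ p ∈ T, p) := by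
  have squarefree_of_ne_zero : ∀ d ∈ n.divisors, (μ d : R) * f d ≠ 0 → Squarefree d := by
    intro d _ h
    contrapose! h
    rw [moebius_eq_zero_of_not_squarefree h, Int.cast_zero, zero_mul]
  rw [← sum_filter_of_ne squarefree_of_ne_zero,
    Nat.sum_divisors_filter_squarefree hn, Nat.factors_eq, List.toFinset_coe, Nat.toFinset_factors]
  refine sum_congr rfl fun T hT => ?_
  rw [prod_val, Function.id_def,
    moebius_prod_primes fun p hp => Nat.prime_of_mem_primeFactors (mem_powerset.1 hT hp),
    Int.cast_pow, Int.cast_neg, Int.cast_one]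

theorem ArithmeticFunction.sum_divisors_moebius_mul_gcd (a : ℕ) {n : ℕ} (hn : n ≠ 0) :
    ∑ d ∈ n.divisors, (μ d : ℤ) * (a.gcd (n / d) : ℤ) = if n ∣ a then (φ n : ℤ) else 0 := by
  have gcd_eq_sum_totient : ∀ k > 0,
      ∑ d ∈ k.divisors, (if d ∣ a then (φ d : ℤ) else 0) = (a.gcd k : ℤ) := fun k hk => by
    exact_mod_cast (sum_filter _ _).symm.trans (Nat.sum_totient_filter_dvd hk.ne')
  have inversion :=
    sum_eq_iff_sum_mul_moebius_eq.1 gcd_eq_sum_totient n (Nat.pos_of_ne_zero hn)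
  simp only [Int.cast_id] at inversion
  rwa [Nat.sum_divisorsAntidiagonal fun i j => (μ i : ℤ) * (a.gcd j : ℤ)] at inversion

/-- For `m > 1` with prime divisor set `S` and any integer `x`,
`∑_{T ⊆ S} (-1)^{|T|} gcd(x, m / d_T)` equals `φ(m)` if `m ∣ x` and `0` otherwise. -/
theorem alternating_sum_gcd_eq_indicator (m : ℕ) (hm : 1 < m) (x : ℤ) :
    (∑ T ∈ m.primeFactors.powerset,
        (-1 : ℤ) ^ T.card * (Int.gcd x ((m / ∏ p ∈ T, p : ℕ) : ℤ) : ℤ)) =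
      if (m : ℤ) ∣ x then (m.totient : ℤ) else 0 := by
  have hm0 : m ≠ 0 := by omega
  rw [← sum_divisors_moebius_mul_eq_sum_powerset hm0 fun d => (x.gcd (m / d : ℕ) : ℤ)]
  simp only [Int.cast_id, Int.gcd, Int.natAbs_natCast, Int.natCast_dvd]
  exact sum_divisors_moebius_mul_gcd x.natAbs hm0
end

section
/- Let N be a positive integer, let k and r be natural numbers, and let A be an r × k integer matrix such that the subgroup of ℤ^k generated by the rows of A contains N·ℤ^k. Then the number of vectors x ∈ (ℤ/Nℤ)^k satisfying A·x = 0 in (ℤ/Nℤ)^r equals the index of the row span of A in ℤ^k, i.e., the cardinality of the quotient group ℤ^k / R(A), where R(A) is the subgroup of ℤ^k generated by the rows of A. -/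
/-!
A solution `x` of `A·x = 0` over `ℤ/Nℤ` is the same thing as the homomorphism
`v ↦ ∑ vⱼ xⱼ` from `ℤ^k` to `ℤ/Nℤ` killing the rows of `A`, i.e. a homomorphism `Q → ℤ/Nℤ`
with `Q = ℤ^k / R(A)`. As `N·ℤ^k ⊆ R(A)`, `Q` is finite of exponent dividing `N`, and
`ℤ/Nℤ`, being cyclic of order `N`, serves as a group of `N`-th roots of unity; duality of
finite abelian groups then gives exactly `|Q|` such homomorphisms.
-/

lemma IsCyclic.hasEnoughRootsOfUnity_card (G : Type*) [CommGroup G] [IsCyclic G] [Finite G] :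
    HasEnoughRootsOfUnity G (Nat.card G) where
  prim := by
    obtain ⟨g, hg⟩ := IsCyclic.exists_generator (α := G)
    exact ⟨g, IsPrimitiveRoot.iff_orderOf.mpr (orderOf_eq_card_of_forall_mem_zpowers hg)⟩
  cyc :=
    have : IsCyclic Gˣ := isCyclic_of_surjective (toUnits : G ≃* Gˣ) toUnits.surjective
    inferInstance

theorem AddCommGroup.card_addMonoidHom_zmod (Q : Type*) [AddCommGroup Q] [Finite Q] (N : ℕ)
    [NeZero N] (hQ : ∀ q : Q, N • q = 0) : Nat.card (Q →+ ZMod N) = Nat.card Q := by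
  have : HasEnoughRootsOfUnity (Multiplicative (ZMod N)) N := by
    simpa using IsCyclic.hasEnoughRootsOfUnity_card (Multiplicative (ZMod N))
  have : HasEnoughRootsOfUnity (Multiplicative (ZMod N)) (Monoid.exponent (Multiplicative Q)) :=
    .of_dvd _ (Monoid.exponent_dvd_of_forall_pow_eq_one fun q => hQ q.toAdd)
  calc Nat.card (Q →+ ZMod N)
      = Nat.card (Multiplicative Q →* (Multiplicative (ZMod N))ˣ) :=
        Nat.card_congr <|
          AddMonoidHom.toMultiplicative.trans (MulEquiv.monoidHomCongrRightEquiv toUnits)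
    _ = Nat.card Q := CommGroup.card_monoidHom_of_hasEnoughRootsOfUnity _ _

lemma AddCommGroup.finite_of_nsmul_eq_zero {M : Type*} [AddCommGroup M] [Module.Finite ℤ M]
    {N : ℕ} (hN : 0 < N) (h : ∀ q : M, N • q = 0) : Finite M :=
  have := Module.Finite.iff_addGroup_fg.mp ‹_›
  AddCommGroup.finite_of_fg_isAddTorsion _ fun q =>
    isOfFinAddOrder_iff_nsmul_eq_zero.mpr ⟨N, hN, h q⟩

lemma Submodule.nsmul_quotient_eq_zero {M : Type*} [AddCommGroup M] {p : Submodule ℤ M} {N : ℕ}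
    (h : ∀ v : M, (N : ℤ) • v ∈ p) (q : M ⧸ p) : N • q = 0 := by
  obtain ⟨v, rfl⟩ := Submodule.Quotient.mk_surjective p q
  rw [← natCast_zsmul, ← Submodule.Quotient.mk_smul, Submodule.Quotient.mk_eq_zero]
  exact h v

def Submodule.quotientLinearMapEquiv {R M P : Type*} [Ring R] [AddCommGroup M] [Module R M]
    [AddCommGroup P] [Module R P] (p : Submodule R M) :
    (M ⧸ p →ₗ[R] P) ≃ {f : M →ₗ[R] P // p ≤ LinearMap.ker f} where
  toFun g := ⟨g ∘ₗ p.mkQ, fun x hx => by simp [(Submodule.Quotient.mk_eq_zero p).mpr hx]⟩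
  invFun f := p.liftQ f f.2
  left_inv _ := Submodule.linearMap_qext p rfl
  right_inv f := Subtype.ext (p.liftQ_mkQ f.1 f.2)

lemma Matrix.map_intCast_mulVec_apply {m n S : Type*} [Fintype n] [Ring S] (A : Matrix m n ℤ)
    (x : n → S) (i : m) :
    (A.map (Int.castRingHom S)).mulVec x i = Module.piEquiv n ℤ S x (A i) := by
  simp [Module.piEquiv_apply_apply, Matrix.mulVec, dotProduct, zsmul_eq_mul]

lemma Matrix.map_intCast_mulVec_eq_zero_iff {m n S : Type*} [Fintype n] [Ring S]
    (A : Matrix m n ℤ) (x : n → S) :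
    (A.map (Int.castRingHom S)).mulVec x = 0 ↔
      Submodule.span ℤ (Set.range A) ≤ LinearMap.ker (Module.piEquiv n ℤ S x) := by
  rw [Submodule.span_le, funext_iff]
  simp only [Matrix.map_intCast_mulVec_apply, Pi.zero_apply]
  exact ⟨fun h _ ⟨i, hi⟩ => hi ▸ h i, fun h i => h ⟨i, rfl⟩⟩

/-- If the row span `R(A)` of an integer matrix `A` contains `N·ℤ^k`, then the number
of solutions `x ∈ (ℤ/Nℤ)^k` of `A·x = 0` equals the index of `R(A)` in `ℤ^k`. -/
theorem card_solutions_eq_index_row_span (N : ℕ) (hN : 0 < N) (k r : ℕ)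
    (A : Matrix (Fin r) (Fin k) ℤ)
    (hNA : ∀ v : Fin k → ℤ, (N : ℤ) • v ∈ Submodule.span ℤ (Set.range A)) :
    Nat.card {x : Fin k → ZMod N //
        (A.map (Int.castRingHom (ZMod N))).mulVec x = 0} =
      Nat.card ((Fin k → ℤ) ⧸ Submodule.span ℤ (Set.range A)) := by
  set p := Submodule.span ℤ (Set.range A)
  have : NeZero N := ⟨hN.ne'⟩
  have hQ := Submodule.nsmul_quotient_eq_zero hNA
  have : Finite ((Fin k → ℤ) ⧸ p) := AddCommGroup.finite_of_nsmul_eq_zero hN hQ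
  calc Nat.card {x : Fin k → ZMod N // (A.map (Int.castRingHom (ZMod N))).mulVec x = 0}
      = Nat.card {f : (Fin k → ℤ) →ₗ[ℤ] ZMod N // p ≤ LinearMap.ker f} :=
        Nat.card_congr <| (Module.piEquiv (Fin k) ℤ (ZMod N)).toEquiv.subtypeEquiv
          (Matrix.map_intCast_mulVec_eq_zero_iff A)
    _ = Nat.card ((Fin k → ℤ) ⧸ p →+ ZMod N) :=
        Nat.card_congr <| p.quotientLinearMapEquiv.symm.trans (addMonoidHomLequivInt ℤ).symm.toEquiv
    _ = Nat.card ((Fin k → ℤ) ⧸ p) := AddCommGroup.card_addMonoidHom_zmod _ N hQ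
end

section
/- Let N be a positive integer, let k and r be natural numbers with r ≥ k, and let A be an r × k integer matrix such that the subgroup R(A) of ℤ^k generated by the rows of A contains N·ℤ^k. Then the index of R(A) in ℤ^k equals the (nonnegative) greatest common divisor of the determinants of all k × k submatrices of A obtained by selecting k of the r rows. -/
/-!
Since `N • ℤ^k ⊆ R(A)`, the lattice `R(A)` has rank `k`; let `W` be the `k × k` matrix whose rows
form a basis of it, so that the index of `R(A)` is `|det W|`. Writing `A = C W` shows that `det W`
divides every maximal minor of `A`. Conversely `W = E A`, and expanding `det (E A)` multilinearly
in the rows writes `det W` as an integral combination of maximal minors of `A`.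
-/

open Finset Function Module

namespace Matrix

/-- Cauchy–Binet before collecting terms: the summands with `h` non-injective vanish. -/
theorem det_mul_eq_sum_prod_mul_det_submatrix {R m n : Type*} [CommRing R] [Fintype m]
    [Fintype n] [DecidableEq n] (E : Matrix n m R) (A : Matrix m n R) :
    (E * A).det = ∑ h : n → m, (∏ i, E i (h i)) * (A.submatrix h id).det := by
  have hrows : (E * A).det = detRowAlternating.toMultilinearMap fun i => ∑ j, E i j • A j := by
    congr 1
    ext i l
    simp [mul_apply, Finset.sum_apply]
  rw [hrows, MultilinearMap.map_sum]
  refine Finset.sum_congr rfl fun h _ => ?_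
  exact (detRowAlternating.toMultilinearMap.map_smul_univ _ _).trans (smul_eq_mul _ _)

theorem exists_mul_eq_of_forall_mem_span {R m n p : Type*} [CommRing R] [Fintype p]
    {A : Matrix m n R} {W : Matrix p n R} (h : ∀ i, A i ∈ Submodule.span R (Set.range W)) :
    ∃ C : Matrix m p R, A = C * W := by
  choose C hC using fun i => (Submodule.mem_span_range_iff_exists_fun R).mp (h i)
  refine ⟨of C, ?_⟩
  ext i l
  simp [mul_apply, ← hC i, Finset.sum_apply]

section GcdMaxMinors

variable {R m n : Type*} [CommRing R] [NormalizedGCDMonoid R]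
  [Fintype m] [Fintype n] [DecidableEq m] [DecidableEq n]

def gcdMaxMinors (A : Matrix m n R) : R :=
  (univ.filter fun g : n → m => Injective g).gcd fun g => (A.submatrix g id).det

theorem gcdMaxMinors_dvd_det_submatrix (A : Matrix m n R) (g : n → m) :
    A.gcdMaxMinors ∣ (A.submatrix g id).det := by
  by_cases hg : Injective g
  · exact Finset.gcd_dvd (by simpa using hg)
  · obtain ⟨i, j, hij, hne⟩ := not_injective_iff.mp hg
    rw [det_zero_of_row_eq hne (funext fun l => by simp [hij])]
    exact dvd_zero _

theorem gcdMaxMinors_dvd_det_mul (E : Matrix n m R) (A : Matrix m n R) :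
    A.gcdMaxMinors ∣ (E * A).det := by
  rw [det_mul_eq_sum_prod_mul_det_submatrix]
  exact Finset.dvd_sum fun h _ => dvd_mul_of_dvd_right (A.gcdMaxMinors_dvd_det_submatrix h) _

theorem det_dvd_gcdMaxMinors_mul (C : Matrix m n R) (W : Matrix n n R) :
    W.det ∣ (C * W).gcdMaxMinors :=
  Finset.dvd_gcd fun g _ => by
    rw [submatrix_mul _ _ _ _ id bijective_id, submatrix_id_id, det_mul]
    exact dvd_mul_left _ _

theorem gcdMaxMinors_eq_normalize_det {A : Matrix m n R} {W : Matrix n n R} {C : Matrix m n R}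
    {E : Matrix n m R} (hA : A = C * W) (hW : W = E * A) :
    A.gcdMaxMinors = normalize W.det := by
  have h₁ : A.gcdMaxMinors ∣ W.det := hW ▸ gcdMaxMinors_dvd_det_mul E A
  have h₂ : W.det ∣ A.gcdMaxMinors := hA ▸ det_dvd_gcdMaxMinors_mul C W
  rw [← normalize_eq_normalize h₁ h₂, gcdMaxMinors, Finset.normalize_gcd]

end GcdMaxMinors

end Matrix

theorem Submodule.finrank_eq_of_smul_mem {R M : Type*} [CommRing R] [IsDomain R]
    [IsPrincipalIdealRing R] [AddCommGroup M] [Module R M] [Module.Finite R M]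
    [IsTorsionFree R M] (S : Submodule R M) {c : R} (hc : c ≠ 0) (hS : ∀ v : M, c • v ∈ S) :
    finrank R S = finrank R M := by
  exact le_antisymm S.finrank_le (LinearMap.finrank_le_finrank_of_injective
    (f := (c • LinearMap.id).codRestrict S hS) fun x y hxy =>
      smul_right_injective M hc (congrArg Subtype.val hxy))

theorem Submodule.natCard_quotient_eq_natAbs_det {ι : Type*} [Fintype ι] [DecidableEq ι]
    (S : Submodule ℤ (ι → ℤ)) (b : Basis ι ℤ S) :
    Nat.card ((ι → ℤ) ⧸ S) = (Matrix.of fun i => (b i : ι → ℤ)).det.natAbs := by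
  rw [← S.natAbs_det_basis_change (Pi.basisFun ℤ ι) b, Pi.basisFun_det_apply]
  rfl

theorem index_row_span_eq_gcd_minors_general (N : ℕ) (hN : 0 < N) (k r : ℕ)
    (A : Matrix (Fin r) (Fin k) ℤ)
    (hNA : ∀ v : Fin k → ℤ, (N : ℤ) • v ∈ Submodule.span ℤ (Set.range A)) :
    (Nat.card ((Fin k → ℤ) ⧸ Submodule.span ℤ (Set.range A)) : ℤ) =
      Finset.gcd (Finset.univ.filter fun g : Fin k → Fin r => Function.Injective g)
        (fun g => (A.submatrix g id).det) := by
  set S := Submodule.span ℤ (Set.range A)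
  have hrank : finrank ℤ S = k := by
    rw [S.finrank_eq_of_smul_mem (by exact_mod_cast hN.ne') hNA, finrank_fin_fun]
  let b := finBasisOfFinrankEq ℤ S hrank
  let W : Matrix (Fin k) (Fin k) ℤ := Matrix.of fun i => (b i : Fin k → ℤ)
  have hS : Submodule.span ℤ (Set.range W) = S :=
    (Submodule.span_range_subtype_eq_top_iff S fun i => (b i).2).mp b.span_eq
  obtain ⟨C, hC⟩ := Matrix.exists_mul_eq_of_forall_mem_span (A := A) (W := W)
    fun i => hS ▸ Submodule.subset_span (Set.mem_range_self i)
  obtain ⟨E, hE⟩ := Matrix.exists_mul_eq_of_forall_mem_span (A := W) (W := A) fun i => (b i).2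
  rw [S.natCard_quotient_eq_natAbs_det b, Int.natCast_natAbs, Int.abs_eq_normalize]
  exact (Matrix.gcdMaxMinors_eq_normalize_det hC hE).symm

/-- If the row span `R(A)` of an `r × k` integer matrix `A` (with `r ≥ k`) contains
`N·ℤ^k`, then the index of `R(A)` in `ℤ^k` equals the nonnegative gcd of the
determinants of the `k × k` submatrices of `A` obtained by selecting `k` of the
`r` rows. -/
theorem index_row_span_eq_gcd_minors (N : ℕ) (hN : 0 < N) (k r : ℕ) (hrk : k ≤ r)
    (A : Matrix (Fin r) (Fin k) ℤ)
    (hNA : ∀ v : Fin k → ℤ, (N : ℤ) • v ∈ Submodule.span ℤ (Set.range A)) :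
    (Nat.card ((Fin k → ℤ) ⧸ Submodule.span ℤ (Set.range A)) : ℤ) =
      Finset.gcd (Finset.univ.filter fun g : Fin k → Fin r => Function.Injective g)
        (fun g => (A.submatrix g id).det) :=
  index_row_span_eq_gcd_minors_general N hN k r A hNA
end

section
/- Let m be an integer with m > 1, let S be its set of prime divisors, and for T ⊆ S write d_T = ∏_{p ∈ T} p and c = φ(m). Then for every integer a with 0 ≤ a < m, the function x ↦ (1/c) Σ_{T ⊆ S} (−1)^{|T|} gcd(x − a, m / d_T) equals 1 when x ≡ a (mod m) and equals 0 otherwise. -/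
open Finset

private lemma sqfprod_factorization {m : ℕ} {T : Finset ℕ} (hT : T ⊆ m.primeFactors)
    (q : ℕ) : (∏ p ∈ T, p).factorization q = if q ∈ T then 1 else 0 := by
  rw [Nat.factorization_prod (fun p hp => (Nat.prime_of_mem_primeFactors (hT hp)).pos.ne')]
  rw [Finsupp.finset_sum_apply]
  rw [Finset.sum_congr rfl (fun p hp => by
    rw [(Nat.prime_of_mem_primeFactors (hT hp)).factorization, Finsupp.single_apply])]
  simp [Finset.sum_ite_eq T q (fun _ => 1)]

private lemma dvd_div_prod_iff {m : ℕ} (hm : m ≠ 0) {e : ℕ} (he : e ∣ m)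
    {T : Finset ℕ} (hT : T ⊆ m.primeFactors) :
    e ∣ m / ∏ p ∈ T, p ↔ ∀ p ∈ T, e * p ∣ m := by
  have hdT : (∏ p ∈ T, p) ∣ m :=
    (Finset.prod_dvd_prod_of_subset _ _ _ hT).trans m.prod_primeFactors_dvd
  have hdT0 : (∏ p ∈ T, p) ≠ 0 := fun h => hm (Nat.eq_zero_of_zero_dvd (h ▸ hdT))
  have he0 : e ≠ 0 := fun h => hm (Nat.eq_zero_of_zero_dvd (h ▸ he))
  rw [Nat.dvd_div_iff_mul_dvd hdT]
  constructor
  · intro h p hp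
    calc e * p = p * e := mul_comm _ _
    _ ∣ (∏ p ∈ T, p) * e := mul_dvd_mul_right (Finset.dvd_prod_of_mem _ hp) e
    _ ∣ m := h
  · intro h
    rw [← Nat.factorization_le_iff_dvd (mul_ne_zero hdT0 he0) hm]
    intro q
    rw [Nat.factorization_mul hdT0 he0, Finsupp.add_apply, sqfprod_factorization hT]
    by_cases hq : q ∈ T
    · have hq' : e * q ∣ m := h q hq
      have hqp : Nat.Prime q := Nat.prime_of_mem_primeFactors (hT hq)
      have := (Nat.factorization_le_iff_dvd (mul_ne_zero he0 hqp.pos.ne') hm).mpr hq' q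
      rw [Nat.factorization_mul he0 hqp.pos.ne', Finsupp.add_apply, hqp.factorization,
        Finsupp.single_apply, if_pos rfl] at this
      simpa [hq, add_comm] using this
    · have := (Nat.factorization_le_iff_dvd he0 hm).mpr he q
      simpa [hq] using this

private lemma filter_empty_iff {m : ℕ} (hm : 1 < m) {e : ℕ} (he : e ∣ m) :
    (m.primeFactors.filter fun p => e * p ∣ m) = ∅ ↔ e = m := by
  have hm0 : m ≠ 0 := by omega
  constructor
  · intro h
    by_contra hne
    have helt : e < m := lt_of_le_of_ne (Nat.le_of_dvd (by omega) he) hne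
    have he0 : e ≠ 0 := fun h0 => hm0 (Nat.eq_zero_of_zero_dvd (h0 ▸ he))
    have hdiv1 : m / e ≠ 1 := by
      intro h1
      have := Nat.div_mul_cancel he
      rw [h1, one_mul] at this
      omega
    have hdiv0 : m / e ≠ 0 := by
      have := Nat.div_pos (Nat.le_of_dvd (by omega) he) (Nat.pos_of_ne_zero he0)
      omega
    set p := (m / e).minFac with hp
    have hpp : p.Prime := Nat.minFac_prime hdiv1
    have hpd : p ∣ m / e := Nat.minFac_dvd _
    have hpm : p ∣ m := hpd.trans (Nat.div_dvd_of_dvd he)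
    have hmem : p ∈ m.primeFactors := Nat.mem_primeFactors.mpr ⟨hpp, hpm, hm0⟩
    have hepm : e * p ∣ m := (Nat.dvd_div_iff_mul_dvd he).mp hpd
    have : p ∈ m.primeFactors.filter fun p => e * p ∣ m :=
      Finset.mem_filter.mpr ⟨hmem, hepm⟩
    rw [h] at this
    exact absurd this (Finset.notMem_empty p)
  · intro h
    subst h
    rw [Finset.filter_eq_empty_iff]
    intro p hp hdvd
    have hpp := Nat.prime_of_mem_primeFactors hp
    have h2 := Nat.le_of_dvd (by omega) hdvd
    nlinarith [hpp.two_le]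

private lemma key_sum (m : ℕ) (hm : 1 < m) (n : ℕ) :
    ∑ T ∈ m.primeFactors.powerset,
        (-1 : ℚ) ^ T.card * (Nat.gcd n (m / ∏ p ∈ T, p) : ℚ) =
      if m ∣ n then (m.totient : ℚ) else 0 := by
  have hm0 : m ≠ 0 := by omega
  -- rewrite each gcd as a sum over divisors of m
  have step1 : ∀ T ∈ m.primeFactors.powerset,
      (Nat.gcd n (m / ∏ p ∈ T, p) : ℚ) =
        ∑ e ∈ m.divisors, if e ∣ n ∧ e ∣ m / ∏ p ∈ T, p then (e.totient : ℚ) else 0 := by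
    intro T hT
    have hTs : T ⊆ m.primeFactors := Finset.mem_powerset.mp hT
    have hdT : (∏ p ∈ T, p) ∣ m :=
      (Finset.prod_dvd_prod_of_subset _ _ _ hTs).trans m.prod_primeFactors_dvd
    set k := m / ∏ p ∈ T, p with hk
    have hk0 : k ≠ 0 := by
      have : 0 < k := Nat.div_pos (Nat.le_of_dvd (by omega) hdT)
        (Nat.pos_of_ne_zero fun h => hm0 (Nat.eq_zero_of_zero_dvd (h ▸ hdT)))
      omega
    have hkm : k ∣ m := Nat.div_dvd_of_dvd hdT
    have hset : (Nat.gcd n k).divisors = m.divisors.filter fun e => e ∣ n ∧ e ∣ k := by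
      ext e
      simp only [Nat.mem_divisors, Finset.mem_filter]
      constructor
      · rintro ⟨hd, -⟩
        exact ⟨⟨(hd.trans (Nat.gcd_dvd_right n k)).trans hkm, hm0⟩,
          hd.trans (Nat.gcd_dvd_left n k), hd.trans (Nat.gcd_dvd_right n k)⟩
      · rintro ⟨-, h1, h2⟩
        refine ⟨Nat.dvd_gcd h1 h2, ?_⟩
        intro h0
        exact hk0 (Nat.eq_zero_of_gcd_eq_zero_right h0)
    have : (Nat.gcd n k : ℚ) = ∑ e ∈ (Nat.gcd n k).divisors, (e.totient : ℚ) := by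
      rw_mod_cast [Nat.sum_totient]
    rw [this, hset, Finset.sum_filter]
  rw [Finset.sum_congr rfl fun T hT => by rw [step1 T hT]]
  simp_rw [Finset.mul_sum]
  rw [Finset.sum_comm]
  -- per-divisor evaluation
  have step2 : ∀ e ∈ m.divisors,
      ∑ T ∈ m.primeFactors.powerset,
          (-1 : ℚ) ^ T.card * (if e ∣ n ∧ e ∣ m / ∏ p ∈ T, p then (e.totient : ℚ) else 0) =
        if e = m then (if m ∣ n then (m.totient : ℚ) else 0) else 0 := by
    intro e hedvd
    have he : e ∣ m := (Nat.mem_divisors.mp hedvd).1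
    set B := m.primeFactors.filter fun p => e * p ∣ m with hB
    have hBS : B ⊆ m.primeFactors := Finset.filter_subset _ _
    have hiff : ∀ T ∈ m.primeFactors.powerset, (e ∣ m / ∏ p ∈ T, p ↔ T ⊆ B) := by
      intro T hT
      have hTs : T ⊆ m.primeFactors := Finset.mem_powerset.mp hT
      rw [dvd_div_prod_iff hm0 he hTs]
      constructor
      · intro h p hp
        exact Finset.mem_filter.mpr ⟨hTs hp, h p hp⟩
      · intro h p hp
        exact (Finset.mem_filter.mp (h hp)).2
    have hterm : ∀ T ∈ m.primeFactors.powerset,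
        (-1 : ℚ) ^ T.card * (if e ∣ n ∧ e ∣ m / ∏ p ∈ T, p then (e.totient : ℚ) else 0) =
          (if T ⊆ B then (-1 : ℚ) ^ T.card else 0) * (if e ∣ n then (e.totient : ℚ) else 0) := by
      intro T hT
      by_cases h1 : T ⊆ B <;> by_cases h2 : e ∣ n <;>
        simp [h1, h2, (hiff T hT).mpr, fun h => (hiff T hT).not.mpr h, mul_comm]
    rw [Finset.sum_congr rfl hterm, ← Finset.sum_mul]
    have hps : m.primeFactors.powerset.filter (fun T => T ⊆ B) = B.powerset := by
      ext T
      simp only [Finset.mem_filter, Finset.mem_powerset]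
      exact ⟨fun h => h.2, fun h => ⟨h.trans hBS, h⟩⟩
    rw [← Finset.sum_filter, hps]
    have hz := Finset.sum_powerset_neg_one_pow_card (α := ℕ) (x := B)
    have hq : ∑ t ∈ B.powerset, (-1 : ℚ) ^ t.card = if B = ∅ then 1 else 0 := by
      exact_mod_cast congrArg (fun z : ℤ => (z : ℚ)) hz
    rw [hq]
    by_cases hem : e = m
    · have hBe : B = ∅ := (filter_empty_iff hm he).mpr hem
      subst hem
      simp [hBe]
    · have hBe : B ≠ ∅ := fun h => hem ((filter_empty_iff hm he).mp h)
      simp [hem, hBe]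
  rw [Finset.sum_congr rfl step2, Finset.sum_ite_eq' m.divisors m
    (fun _ => if m ∣ n then (m.totient : ℚ) else 0)]
  rw [if_pos (Nat.mem_divisors_self m hm0)]

/-- For `m > 1` with prime divisor set `S` and `c = φ(m)`, for each `0 ≤ a < m` the
function `x ↦ (1/c) ∑_{T ⊆ S} (-1)^{|T|} gcd(x - a, m / d_T)` is the indicator
function of the residue class of `a` modulo `m`. -/
theorem indicator_of_residue_class (m : ℕ) (hm : 1 < m) (a : ℤ)
    (ha : 0 ≤ a ∧ a < m) (x : ℤ) :
    (1 / (m.totient : ℚ)) *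
        ∑ T ∈ m.primeFactors.powerset,
          (-1 : ℚ) ^ T.card * (Int.gcd (x - a) ((m / ∏ p ∈ T, p : ℕ) : ℤ) : ℚ) =
      if (m : ℤ) ∣ x - a then 1 else 0 := by
  have hgcd : ∀ T : Finset ℕ,
      Int.gcd (x - a) ((m / ∏ p ∈ T, p : ℕ) : ℤ) = Nat.gcd (x - a).natAbs (m / ∏ p ∈ T, p) := by
    intro T
    simp only [Int.gcd, Int.natAbs_natCast]
  simp_rw [hgcd]
  rw [key_sum m hm (x - a).natAbs]
  have hc : (m.totient : ℚ) ≠ 0 := by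
    exact_mod_cast (Nat.totient_pos.mpr (by omega)).ne'
  by_cases hd : (m : ℤ) ∣ x - a
  · rw [if_pos hd, if_pos (Int.natCast_dvd.mp hd)]
    field_simp
  · rw [if_neg hd, if_neg fun h => hd (Int.natCast_dvd.mpr h)]
    simp
end
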